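/- Let (a_n)_{n≥1} be elements of a P-tracial algebra, all with the same P-distribution (κ_p(a_n,…,a_n) is independent of n for every p), which are P-free in the following sense: for every k, every p ∈ P_k and every (n₁,…,n_k) ∈ ℕ^k, κ_p(a_{n₁},…,a_{n_k}) = 0 unless the map j ↦ n_j is constant on every block of p, and in that case κ_p(a_{n₁},…,a_{n_k}) = Π_v κ_{p_{|b_v}}(a_v,…,a_v), the product over the distinct values v of (n_j), where b_v is the union of the cycles of p whose indices all carry the value v. Assume κ_q(a₁) = 0 for both q ∈ P₁ (vanishing first-order cumulants). Set S_n = n^{−1/2}(a₁+⋯+a_n). Then for every k and every p ∈ P_k, κ_p(S_n,…,S_n) converges as n → ∞, and its limit equals Σ_π Π_{b∈π} κ_{p_{|∪b}}(a₁,a₁), where the sum ranges over the set partitions π of the set of cycles of p all of whose blocks consist either of a single cycle of p containing exactly two elements of {1,…,k}, or of two cycles of p each containing exactly one element of {1,…,k} (the sum being empty, hence the limit 0, if no such π exists). In particular S_n converges in P-distribution to a centered P-Gaussian element, whose cumulants depend only on the second-order cumulants κ_q(a₁,a₁), q ∈ P₂, of a₁. -/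

import Mathlib

/-!
Cumulants are multilinear, being obtained from the multilinear moments by Möbius inversion
along the geodesic order, which is graded by `d(id_k, ·)`. Expanding `κ_p(S_n)` therefore gives
`n^{-k/2} ∑_r κ_p(a_{r(1)}, …, a_{r(k)})` over all `r : {1,…,k} → {0,…,n-1}`. By freeness and
identical distribution a term vanishes unless the kernel `q` of `r` is coarser than the cycle
partition of `p`, and then it equals `∏_{b ∈ q} κ_{p_{|b}}(a₀, …, a₀)`. The `n (n-1) ⋯ (n-|q|+1)`
maps with kernel `q` contribute `≈ n^{|q| - k/2}` times this product. A block of size one kills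
the product (the first-order cumulants vanish), so `|q| ≤ k/2`, and only the partitions `q` into
pairs survive in the limit. A pair that is a union of cycles of `p` is either one cycle with two
columns or two one-column cycles.
-/

open scoped Classical

/-- Partitions of `{1,…,k,1′,…,k′}`, modelled as setoids on `Fin k ⊕ Fin k`
(unprimed elements on the left, primed on the right). -/
abbrev PP (k : ℕ) := Setoid (Fin k ⊕ Fin k)

noncomputable instance setoidFintypeInst {α : Type*} [Fintype α] : Fintype (Setoid α) :=
  Fintype.ofInjective
    (fun s : Setoid α => (Finset.univ.filter fun p : α × α => s.r p.1 p.2))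
    (by
      intro s t h
      have h' : ∀ x y : α, s.r x y ↔ t.r x y := by
        intro x y
        have := Finset.ext_iff.mp h (x, y)
        simpa using this
      exact Setoid.ext h')

/-- number of blocks of a partition -/
noncomputable def nC {α : Type*} (s : Setoid α) : ℕ := Nat.card (Quotient s)

/-- the identity partition `{{i,i′}}`. -/
def idP (k : ℕ) : PP k := Setoid.ker (Sum.elim (id : Fin k → Fin k) id)

/-- twice the distance `d(p,q) = (nc p + nc q)/2 − nc (p ⊔ q)`. -/
noncomputable def d2 {k : ℕ} (p q : PP k) : ℤ := (nC p : ℤ) + nC q - 2 * nC (p ⊔ q)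

/-- the geodesic order on partitions: `q ≤ p` iff `d(id,q) + d(q,p) = d(id,p)`. -/
def pLe {k : ℕ} (q p : PP k) : Prop := d2 (idP k) q + d2 q p = d2 (idP k) p

/-- a permutation `σ` seen as the partition `{{i, σ(i)′}}`. -/
def permToP {k : ℕ} (σ : Equiv.Perm (Fin k)) : PP k :=
  Setoid.ker (Sum.elim (fun i => σ i) (fun j => j))

/-- tensor product of partitions: place `q` to the right of `p`. -/
def ptensor {k l : ℕ} (p : PP k) (q : PP l) : PP (k + l) :=
  Setoid.ker (fun x : Fin (k + l) ⊕ Fin (k + l) =>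
    match x with
    | Sum.inl i =>
      (match finSumFinEquiv.symm i with
       | Sum.inl a => (Sum.inl (Quotient.mk p (Sum.inl a)) : Quotient p ⊕ Quotient q)
       | Sum.inr b => Sum.inr (Quotient.mk q (Sum.inl b)))
    | Sum.inr i =>
      (match finSumFinEquiv.symm i with
       | Sum.inl a => Sum.inl (Quotient.mk p (Sum.inr a))
       | Sum.inr b => Sum.inr (Quotient.mk q (Sum.inr b))))

/-- transpose of a partition: exchange `i` and `i′`. -/
def ptrans {k : ℕ} (p : PP k) : PP k := Setoid.comap Sum.swap p

/-- the map exchanging `j` and `j′` for the (0-based) indices `j ≥ l`. -/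
def swapAbove {k : ℕ} (l : ℕ) : Fin k ⊕ Fin k → Fin k ⊕ Fin k
  | Sum.inl i => if l ≤ (i : ℕ) then Sum.inr i else Sum.inl i
  | Sum.inr i => if l ≤ (i : ℕ) then Sum.inl i else Sum.inr i

/-- the operation `S_l` on partitions: exchange `j` and `j′` for every column `j > l`. -/
def sOp {k : ℕ} (l : ℕ) (p : PP k) : PP k := Setoid.comap (swapAbove l) p

/-- the setoid of "same cycle of σ". -/
def sameCycleSetoid {k : ℕ} (σ : Equiv.Perm (Fin k)) : Setoid (Fin k) :=
  ⟨σ.SameCycle, ⟨fun _ => Equiv.Perm.SameCycle.refl σ _, fun h => h.symm, fun h h' => h.trans h'⟩⟩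

/-- number of orbits (fixed points included) of a permutation. -/
noncomputable def cyc {k : ℕ} (σ : Equiv.Perm (Fin k)) : ℕ :=
  Nat.card (Quotient (sameCycleSetoid σ))

/-- reflection length `ℓ(σ) = k − c(σ)`. -/
noncomputable def plen {k : ℕ} (σ : Equiv.Perm (Fin k)) : ℤ := (k : ℤ) - cyc σ

/-- the geodesic (absolute) order on permutations. -/
def permLe {k : ℕ} (τ σ : Equiv.Perm (Fin k)) : Prop := plen τ + plen (τ⁻¹ * σ) = plen σ

/-- `σ₁ ⊕ σ₂`, acting as `σ₁` on `{1,…,l}` and as the shifted copy of `σ₂` on `{l+1,…,l+m}`. -/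
def sumPerm {l m : ℕ} (σ₁ : Equiv.Perm (Fin l)) (σ₂ : Equiv.Perm (Fin m)) :
    Equiv.Perm (Fin (l + m)) :=
  finSumFinEquiv.permCongr (Equiv.sumCongr σ₁ σ₂)

/-- the setoid generated by a relation `r`. -/
def genSetoid {α : Type*} (r : α → α → Prop) : Setoid α :=
  sInf {s : Setoid α | ∀ x y, r x y → s.r x y}

/-- the lexicographic encoding `(j, t) ↦ ∑_{j' < j} n j' + t` of `Σ j, Fin (n j)` into
`Fin (∑ j, n j)`. -/
def encodeSigma {k : ℕ} (n : Fin k → ℕ) (x : Σ j : Fin k, Fin (n j)) : Fin (∑ j, n j) :=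
  ⟨(∑ j' ∈ Finset.univ.filter fun j' => j' < x.1, n j') + (x.2 : ℕ), by
    calc (∑ j' ∈ Finset.univ.filter fun j' => j' < x.1, n j') + (x.2 : ℕ)
        < (∑ j' ∈ Finset.univ.filter fun j' => j' < x.1, n j') + n x.1 := by
          exact Nat.add_lt_add_left x.2.isLt _
      _ = ∑ j' ∈ insert x.1 (Finset.univ.filter fun j' => j' < x.1), n j' := by
          rw [Finset.sum_insert (by simp)]
          ring
      _ ≤ ∑ j', n j' := Finset.sum_le_sum_of_subset (Finset.subset_univ _)⟩

/-- `endOf n x` identifies `x` as an external endpoint of its group: the top of the `j`-th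
group if `x` is the first unprimed element, the bottom if `x` is the last primed one. -/
def endOf {k : ℕ} (n : Fin k → ℕ) :
    (Σ j : Fin k, Fin (n j)) ⊕ (Σ j : Fin k, Fin (n j)) → Option (Fin k ⊕ Fin k)
  | Sum.inl ⟨j, t⟩ => if (t : ℕ) = 0 then some (Sum.inl j) else none
  | Sum.inr ⟨j, t⟩ => if (t : ℕ) + 1 = n j then some (Sum.inr j) else none

/-- the elementary relations defining the partition `Insⁿ(p) ∘ σ` appearing in the
product-compatibility axiom: within the `j`-th group, the primed (bottom) vertex of a
factor is glued to the unprimed (top) vertex of the next factor, and the external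
endpoints of the groups are glued according to `p`. -/
def chainRel {k : ℕ} (n : Fin k → ℕ) (p : PP k) :
    ((Σ j : Fin k, Fin (n j)) ⊕ (Σ j : Fin k, Fin (n j))) →
      ((Σ j : Fin k, Fin (n j)) ⊕ (Σ j : Fin k, Fin (n j))) → Prop :=
  fun x y =>
    (∃ (j : Fin k) (t : ℕ) (h1 : t + 1 < n j),
        x = Sum.inr ⟨j, ⟨t, Nat.lt_of_succ_lt h1⟩⟩ ∧ y = Sum.inl ⟨j, ⟨t + 1, h1⟩⟩) ∨
    (∃ u v, p.r u v ∧ endOf n x = some u ∧ endOf n y = some v)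

/-- the partition `Insⁿ_i(p) ∘ σ ∈ P_{∑ n_j}` of the product-compatibility axiom. -/
def insPart {k : ℕ} (n : Fin k → ℕ) (p : PP k) : PP (∑ j, n j) :=
  genSetoid fun x y =>
    ∃ u v, chainRel n p u v ∧
      x = Sum.map (encodeSigma n) (encodeSigma n) u ∧
      y = Sum.map (encodeSigma n) (encodeSigma n) v

/-- relabelling of the columns of a partition by a permutation: `σ ∘ p ∘ σ⁻¹`. -/
def relabel {k : ℕ} (σ : Equiv.Perm (Fin k)) (p : PP k) : PP k :=
  Setoid.comap (Sum.map σ.symm σ.symm) p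

/-- A `P`-tracial algebra: a complex algebra `A` together with `k`-linear forms
`m_p : A^k → ℂ`, indexed by the partitions `p ∈ P_k`, which are symmetric under
simultaneous relabelling of the columns and of the arguments, and compatible with the
product of `A`. -/
structure PTracial (A : Type*) [Ring A] [Algebra ℂ A] where
  m : ∀ k : ℕ, PP k → (Fin k → A) → ℂ
  m_add : ∀ (k : ℕ) (p : PP k) (a : Fin k → A) (s : Fin k) (x y : A),
    m k p (Function.update a s (x + y)) =
      m k p (Function.update a s x) + m k p (Function.update a s y)
  m_smul : ∀ (k : ℕ) (p : PP k) (a : Fin k → A) (s : Fin k) (c : ℂ) (x : A),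
    m k p (Function.update a s (c • x)) = c * m k p (Function.update a s x)
  m_symm : ∀ (k : ℕ) (p : PP k) (σ : Equiv.Perm (Fin k)) (a : Fin k → A),
    m k p a = m k (relabel σ p) fun s => a (σ.symm s)
  m_prod : ∀ (k : ℕ) (p : PP k) (n : Fin k → ℕ), (∀ j, 0 < n j) →
    ∀ (a : ∀ j : Fin k, Fin (n j) → A) (b : Fin (∑ j, n j) → A),
      (∀ (j : Fin k) (t : Fin (n j)), b (encodeSigma n ⟨j, t⟩) = a j t) →
      m k p (fun j => (List.ofFn (a j)).prod) = m (∑ j, n j) (insPart n p) b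

/-- extraction of a partition to a subset `J` of its columns. -/
def extractP {k : ℕ} (p : PP k) (J : Finset (Fin k)) : PP J.card :=
  Setoid.comap
    (Sum.map (fun t => ((J.orderIsoOfFin rfl t : J) : Fin k))
      (fun t => ((J.orderIsoOfFin rfl t : J) : Fin k))) p

/-- columns `s` and `t` meet a common block of `p`. -/
def colRel {k : ℕ} (p : PP k) (s t : Fin k) : Prop :=
  p.r (Sum.inl s) (Sum.inl t) ∨ p.r (Sum.inl s) (Sum.inr t) ∨
    p.r (Sum.inr s) (Sum.inl t) ∨ p.r (Sum.inr s) (Sum.inr t)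

/-- `P`-freeness of two subalgebras, relative to the `P`-cumulant forms `κ`:
not-compatible mixed cumulants vanish, and cumulants factorize over tensor products. -/
def PFree {A : Type*} [Ring A] [Algebra ℂ A]
    (κ : ∀ k : ℕ, PP k → (Fin k → A) → ℂ) (A₁ A₂ : Subalgebra ℂ A) : Prop :=
  (∀ (k : ℕ) (p : PP k) (a : Fin k → A), (∀ s, a s ∈ A₁ ∨ a s ∈ A₂) →
    (∃ s s' : Fin k, a s ∈ A₁ ∧ a s' ∈ A₂ ∧ colRel p s s') → κ k p a = 0) ∧
  (∀ (k₁ k₂ : ℕ) (p₁ : PP k₁) (p₂ : PP k₂) (a : Fin k₁ → A) (b : Fin k₂ → A),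
    (∀ s, a s ∈ A₁) → (∀ s, b s ∈ A₂) →
    κ (k₁ + k₂) (ptensor p₁ p₂) (Fin.append a b) = κ k₁ p₁ a * κ k₂ p₂ b)

/-- the column of an element of `{1,…,k,1′,…,k′}`. -/
def colOf {k : ℕ} : Fin k ⊕ Fin k → Fin k := Sum.elim id id

/-- the partition of the columns into the cycles of `p` (the blocks of `p ∨ id_k`). -/
def colSetoid {k : ℕ} (p : PP k) : Setoid (Fin k) :=
  Setoid.comap Sum.inl (p ⊔ idP k)

/-- the blocks of a set partition of `Fin k`, as a finite set of finite sets. -/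
noncomputable def classesOf {k : ℕ} (q : Setoid (Fin k)) : Finset (Finset (Fin k)) :=
  Finset.univ.image fun j => Finset.univ.filter fun j' => q.r j j'

section NumClasses

variable {α : Type*} [Finite α] {s t : Setoid α}

lemma nC_le_of_le (h : s ≤ t) : nC t ≤ nC s :=
  Nat.card_le_card_of_surjective (Quot.factor s.r t.r h)
    ((Quot.surjective_lift _).2 Quot.mk_surjective)

lemma eq_of_le_of_nC_le (h : s ≤ t) (hc : nC s ≤ nC t) : s = t := by
  have hbij := ((Quot.surjective_lift _).2 Quot.mk_surjective :
    Function.Surjective (Quot.factor s.r t.r h)).bijective_of_nat_card_le hc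
  refine le_antisymm h fun x y hxy => Quotient.exact (hbij.1 ?_)
  exact Quot.sound hxy

end NumClasses

section GeodesicOrder

variable {k : ℕ}

lemma d2_nonneg (p q : PP k) : 0 ≤ d2 p q := by
  have := nC_le_of_le (le_sup_left : p ≤ p ⊔ q)
  have := nC_le_of_le (le_sup_right : q ≤ p ⊔ q)
  unfold d2; omega

lemma eq_of_d2_eq_zero {p q : PP k} (h : d2 p q = 0) : p = q := by
  have hp := nC_le_of_le (le_sup_left : p ≤ p ⊔ q)
  have hq := nC_le_of_le (le_sup_right : q ≤ p ⊔ q)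
  unfold d2 at h
  exact (eq_of_le_of_nC_le le_sup_left (by omega)).trans
    (eq_of_le_of_nC_le le_sup_right (by omega)).symm

lemma pLe_refl (p : PP k) : pLe p p := by
  unfold pLe d2
  rw [sup_idem]
  ring

lemma d2_idP_lt_of_pLe {p' p : PP k} (h : pLe p' p) (hne : p' ≠ p) :
    d2 (idP k) p' < d2 (idP k) p := by
  have := d2_nonneg p' p
  have : d2 p' p ≠ 0 := fun h0 => hne (eq_of_d2_eq_zero h0)
  unfold pLe at h
  omega

end GeodesicOrder

lemma MultilinearMap.map_smul_sum_const {R ι M N α : Type*} [CommSemiring R] [AddCommMonoid M]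
    [Module R M] [AddCommMonoid N] [Module R N] [Fintype ι] [DecidableEq ι]
    (F : MultilinearMap R (fun _ : ι => M) N) (c : R) (s : Finset α) (g : α → M) :
    F (fun _ => c • ∑ i ∈ s, g i) =
      c ^ Fintype.card ι • ∑ r ∈ Fintype.piFinset fun _ : ι => s, F fun j => g (r j) := by
  rw [F.map_smul_univ (fun _ => c) (fun _ => ∑ i ∈ s, g i), Finset.prod_const, Finset.card_univ,
    F.map_sum_finset (fun _ => g) (fun _ => s)]

namespace PTracial

variable {A : Type*} [Ring A] [Algebra ℂ A] (T : PTracial A)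

noncomputable def moment (k : ℕ) (p : PP k) : MultilinearMap ℂ (fun _ : Fin k => A) ℂ where
  toFun := T.m k p
  map_update_add' := by
    intro _ a s x y
    convert T.m_add k p a s x y
  map_update_smul' := by
    intro _ a s c x
    rw [smul_eq_mul]
    convert T.m_smul k p a s c x

variable {κ : ∀ k : ℕ, PP k → (Fin k → A) → ℂ}
  (hκ : ∀ (k : ℕ) (p : PP k) (a : Fin k → A),
    T.m k p a = ∑ p' : PP k, if pLe p' p then κ k p' a else 0)
include hκ

lemma cumulant_eq_moment_sub (k : ℕ) (p : PP k) :
    κ k p = T.moment k p - ∑ p' ∈ (Finset.univ.filter (pLe · p)).erase p, κ k p' := by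
  funext a
  have hp : p ∈ Finset.univ.filter (pLe · p) := by simp [pLe_refl]
  rw [Pi.sub_apply, Finset.sum_apply, eq_sub_iff_add_eq, moment, MultilinearMap.coe_mk, hκ,
    ← Finset.sum_filter, ← Finset.add_sum_erase _ _ hp]

lemma exists_multilinearMap_eq_cumulant (k : ℕ) (p : PP k) :
    ∃ F : MultilinearMap ℂ (fun _ : Fin k => A) ℂ, ⇑F = κ k p := by
  rw [cumulant_eq_moment_sub T hκ]
  obtain ⟨G, hG⟩ : ∃ G : MultilinearMap ℂ (fun _ : Fin k => A) ℂ,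
      ⇑G = ∑ p' ∈ (Finset.univ.filter (pLe · p)).erase p, κ k p' := by
    refine Finset.sum_induction _ (fun f => ∃ G : MultilinearMap ℂ _ ℂ, ⇑G = f)
      (fun _ _ ⟨G₁, h₁⟩ ⟨G₂, h₂⟩ => ⟨G₁ + G₂, by rw [← h₁, ← h₂]; rfl⟩)
      ⟨0, rfl⟩ fun p' hp' => ?_
    exact exists_multilinearMap_eq_cumulant k p'
  exact ⟨T.moment k p - G, by rw [← hG]; rfl⟩
termination_by (d2 (idP k) p).toNat
decreasing_by
  obtain ⟨hne, hle⟩ := Finset.mem_erase.mp hp'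
  rw [Finset.mem_filter] at hle
  have := d2_idP_lt_of_pLe hle.2 hne
  have := d2_nonneg (idP k) p'
  omega

end PTracial

open Filter Topology Asymptotics in
lemma tendsto_inv_sqrt_pow_mul_descFactorial {k m : ℕ} (h : 2 * m ≤ k) :
    Tendsto (fun n : ℕ => (√n)⁻¹ ^ k * n.descFactorial m) atTop (𝓝 (0 ^ (k - 2 * m))) := by
  have hequiv : (fun n : ℕ => (√n)⁻¹ ^ k * n.descFactorial m) ~[atTop]
      fun n : ℕ => (√n)⁻¹ ^ (k - 2 * m) := by
    refine (Asymptotics.IsEquivalent.refl.mul (isEquivalent_descFactorial m)).congr_right ?_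
    filter_upwards [eventually_gt_atTop 0] with n hn
    have hs : √(n : ℝ) ≠ 0 := by positivity
    have hn2 : (n : ℝ) ^ m = √n ^ (2 * m) := by rw [pow_mul, Real.sq_sqrt (Nat.cast_nonneg _)]
    rw [Pi.mul_apply, hn2, ← Nat.sub_add_cancel h, pow_add, Nat.add_sub_cancel, mul_assoc,
      ← mul_pow, inv_mul_cancel₀ hs, one_pow, mul_one]
  refine hequiv.symm.tendsto_nhds ?_
  exact ((tendsto_inv_atTop_zero.comp Real.tendsto_sqrt_atTop).comp
    tendsto_natCast_atTop_atTop).pow _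

section Classes

variable {k : ℕ}

lemma forall_rel_colOf_iff {β : Type*} (p : PP k) (r : Fin k → β) :
    (∀ x y, p.r x y → r (colOf x) = r (colOf y)) ↔ colSetoid p ≤ Setoid.ker r := by
  have hcol : ∀ x, (p ⊔ idP k) (Sum.inl (colOf x)) x := fun x =>
    Setoid.le_def.mp le_sup_right (show colOf (Sum.inl (colOf x)) = colOf x from rfl)
  constructor
  · intro H i j hij
    have hsup : p ⊔ idP k ≤ Setoid.ker (r ∘ colOf) :=
      sup_le (fun x y h => H x y h) fun x y h => congrArg r h
    exact hsup hij
  · intro H x y hxy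
    exact H <| (p ⊔ idP k).trans (hcol x) <|
      (p ⊔ idP k).trans (Setoid.le_def.mp le_sup_left hxy) ((p ⊔ idP k).symm (hcol y))

lemma classesOf_eq_parts (q : Setoid (Fin k)) : classesOf q = (Finpartition.ofSetoid q).parts :=
  rfl

lemma sum_card_classesOf (q : Setoid (Fin k)) : ∑ b ∈ classesOf q, b.card = k := by
  rw [classesOf_eq_parts, Finpartition.sum_card_parts, Finset.card_univ, Fintype.card_fin]

lemma ker_filter_rel (q : Setoid (Fin k)) :
    Setoid.ker (fun j => Finset.univ.filter fun j' => q.r j j') = q := by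
  ext i j
  rw [Setoid.ker_def, Finset.ext_iff]
  simp only [Finset.mem_filter, Finset.mem_univ, true_and]
  exact ⟨fun h => (h j).2 (q.refl j), fun h x => ⟨q.trans (q.symm h), q.trans h⟩⟩

lemma card_classesOf (q : Setoid (Fin k)) : (classesOf q).card = nC q := by
  conv_rhs => rw [nC, ← ker_filter_rel q]
  rw [Nat.card_congr (Setoid.quotientKerEquivRange _), ← Set.image_univ, ← Finset.coe_univ,
    ← Finset.coe_image, Nat.card_coe_set_eq, Set.ncard_coe_finset]
  rfl

lemma prod_fibers_eq_prod_classesOf {M β : Type*} [CommMonoid M] [DecidableEq β] (r : Fin k → β)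
    (F : Finset (Fin k) → M) :
    ∏ v ∈ Finset.univ.image r, F (Finset.univ.filter fun j => r j = v) =
      ∏ b ∈ classesOf (Setoid.ker r), F b := by
  have : classesOf (Setoid.ker r) =
      (Finset.univ.image r).image fun v => Finset.univ.filter fun j => r j = v := by
    rw [Finset.image_image, classesOf]
    congr 1
    funext j
    ext j'
    simp [Setoid.ker_def, eq_comm]
  rw [this]
  refine (Finset.prod_image fun v hv w _ hvw => ?_).symm
  obtain ⟨j, -, rfl⟩ := Finset.mem_image.mp hv
  have : j ∈ Finset.univ.filter fun j' => r j' = w := by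
    rw [← show _ = _ from hvw]; simp
  exact (Finset.mem_filter.mp this).2

lemma card_pos_of_mem_classesOf {q : Setoid (Fin k)} {b : Finset (Fin k)}
    (hb : b ∈ classesOf q) : 0 < b.card :=
  ((Finpartition.ofSetoid q).nonempty_of_mem_parts hb).card_pos

lemma two_mul_nC_eq_sum (q : Setoid (Fin k)) : 2 * nC q = ∑ _b ∈ classesOf q, 2 := by
  rw [Finset.sum_const, smul_eq_mul, card_classesOf, mul_comm]

lemma two_mul_nC_le {q : Setoid (Fin k)} (hge : ∀ b ∈ classesOf q, 2 ≤ b.card) :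
    2 * nC q ≤ k := by
  rw [two_mul_nC_eq_sum]
  exact (Finset.sum_le_sum hge).trans_eq (sum_card_classesOf q)

lemma two_mul_nC_eq_iff {q : Setoid (Fin k)} (hge : ∀ b ∈ classesOf q, 2 ≤ b.card) :
    2 * nC q = k ↔ ∀ b ∈ classesOf q, b.card = 2 := by
  calc 2 * nC q = k ↔ ∑ _b ∈ classesOf q, 2 = ∑ b ∈ classesOf q, b.card := by
        rw [two_mul_nC_eq_sum, sum_card_classesOf]
    _ ↔ ∀ b ∈ classesOf q, 2 = b.card := Finset.sum_eq_sum_iff_of_le hge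
    _ ↔ ∀ b ∈ classesOf q, b.card = 2 := forall₂_congr fun _ _ => eq_comm

lemma filter_rel_subset_of_mem_classesOf {s q : Setoid (Fin k)} (hsq : s ≤ q)
    {b : Finset (Fin k)} (hb : b ∈ classesOf q) {j : Fin k} (hj : j ∈ b) :
    (Finset.univ.filter fun j' => s.r j j') ⊆ b := by
  obtain ⟨i, -, rfl⟩ := Finset.mem_image.mp hb
  simp only [Finset.subset_iff, Finset.mem_filter, Finset.mem_univ, true_and] at hj ⊢
  exact fun x hx => q.trans hj (hsq hx)

lemma pairing_iff_forall_card_eq_two {s q : Setoid (Fin k)} (hsq : s ≤ q) :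
    (∀ b ∈ classesOf q, (b ∈ classesOf s ∧ b.card = 2) ∨
        (b.card = 2 ∧ ∀ j ∈ b, (Finset.univ.filter fun j' => s.r j j') = {j})) ↔
      ∀ b ∈ classesOf q, b.card = 2 := by
  refine ⟨fun h b hb => (h b hb).elim And.right And.left, fun h b hb => ?_⟩
  have hsub := fun j (hj : j ∈ b) => filter_rel_subset_of_mem_classesOf hsq hb hj
  by_cases hpair : ∃ j ∈ b, (Finset.univ.filter fun j' => s.r j j').card = 2
  · obtain ⟨j, hj, hcard⟩ := hpair
    have hb' := Finset.eq_of_subset_of_card_le (hsub j hj) (by rw [h b hb, hcard])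
    exact .inl ⟨Finset.mem_image.mpr ⟨j, Finset.mem_univ _, hb'⟩, h b hb⟩
  · refine .inr ⟨h b hb, fun j hj => ?_⟩
    have hle : (Finset.univ.filter fun j' => s.r j j').card ≤ 1 := by
      have := Finset.card_le_card (hsub j hj)
      have : (Finset.univ.filter fun j' => s.r j j').card ≠ 2 := fun h' => hpair ⟨j, hj, h'⟩
      have := h b hb
      omega
    have hjj : j ∈ Finset.univ.filter fun j' => s.r j j' := by simp
    exact Finset.eq_singleton_iff_unique_mem.2
      ⟨hjj, fun x hx => Finset.card_le_one.1 hle x hx j hjj⟩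

lemma card_filter_ker_eq (q : Setoid (Fin k)) (n : ℕ) :
    ((Fintype.piFinset fun _ : Fin k => Finset.range n).filter (Setoid.ker · = q)).card =
      n.descFactorial (nC q) := by
  have : n.descFactorial (nC q) = (Finset.univ : Finset (Quotient q ↪ Fin n)).card := by
    rw [Finset.card_univ, Fintype.card_embedding_eq, Fintype.card_fin, nC,
      Nat.card_eq_fintype_card]
  rw [this]
  symm
  refine Finset.card_bij (fun g _ j => (g ⟦j⟧ : ℕ)) (fun g _ => ?_) (fun g₁ _ g₂ _ h => ?_) ?_
  · simp only [Finset.mem_filter, Fintype.mem_piFinset, Finset.mem_range, Fin.is_lt,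
      implies_true, true_and]
    ext i j
    rw [Setoid.ker_def, Fin.val_inj, g.injective.eq_iff, Quotient.eq]
  · refine DFunLike.ext _ _ fun x => Quotient.inductionOn x fun j => Fin.ext (congrFun h j)
  · intro r hr
    obtain ⟨hrange, rfl⟩ := Finset.mem_filter.mp hr
    rw [Fintype.mem_piFinset] at hrange
    refine ⟨⟨Quotient.lift (fun j => ⟨r j, Finset.mem_range.mp (hrange j)⟩) fun i j h => Fin.ext h,
      fun x y => Quotient.inductionOn₂ x y fun i j h => Quotient.sound (congrArg Fin.val h)⟩,
      Finset.mem_univ _, rfl⟩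

lemma sum_piFinset_range_ker {M : Type*} [AddCommMonoid M] (g : Setoid (Fin k) → M)
    (n : ℕ) :
    ∑ r ∈ Fintype.piFinset (fun _ : Fin k => Finset.range n), g (Setoid.ker r) =
      ∑ q : Setoid (Fin k), n.descFactorial (nC q) • g q := by
  rw [← Finset.sum_fiberwise_of_maps_to (g := Setoid.ker) (t := Finset.univ)
    fun _ _ => Finset.mem_univ _]
  refine Finset.sum_congr rfl fun q _ => ?_
  rw [Finset.sum_congr rfl fun r hr => by rw [(Finset.mem_filter.mp hr).2], Finset.sum_const,
    card_filter_ker_eq]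

open Filter Topology in
lemma tendsto_inv_sqrt_pow_mul_descFactorial_mul (q : Setoid (Fin k)) (w : ℂ)
    (hw : (∃ b ∈ classesOf q, b.card = 1) → w = 0) :
    Tendsto (fun n : ℕ => (((√n)⁻¹ : ℝ) : ℂ) ^ k * n.descFactorial (nC q) * w) atTop
      (𝓝 (if ∀ b ∈ classesOf q, b.card = 2 then w else 0)) := by
  by_cases hone : ∃ b ∈ classesOf q, b.card = 1
  · simp [hw hone]
  have hge : ∀ b ∈ classesOf q, 2 ≤ b.card := fun b hb => by
    have := card_pos_of_mem_classesOf hb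
    have : b.card ≠ 1 := fun h => hone ⟨b, hb, h⟩
    omega
  have hexp : k - 2 * nC q = 0 ↔ ∀ b ∈ classesOf q, b.card = 2 := by
    have := two_mul_nC_le hge
    rw [← two_mul_nC_eq_iff hge]
    omega
  have hlim := ((Complex.continuous_ofReal.tendsto _).comp
    (tendsto_inv_sqrt_pow_mul_descFactorial (two_mul_nC_le hge))).mul_const w
  convert hlim using 2
  · simp
  · rw [zero_pow_eq]
    simp only [hexp]
    split_ifs <;> simp

end Classes

section CentralLimit

variable {A : Type*} {κ : ∀ k : ℕ, PP k → (Fin k → A) → ℂ} {a : ℕ → A}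

noncomputable def blockCumulantProd (κ : ∀ k : ℕ, PP k → (Fin k → A) → ℂ) (x : A) {k : ℕ}
    (p : PP k) (q : Setoid (Fin k)) : ℂ :=
  ∏ b ∈ classesOf q, κ b.card (extractP p b) fun _ => x

variable
  (hsame : ∀ (k : ℕ) (p : PP k) (n n' : ℕ), κ k p (fun _ => a n) = κ k p (fun _ => a n'))
  (hvanish : ∀ (k : ℕ) (p : PP k) (nv : Fin k → ℕ),
    (¬ ∀ x y, p.r x y → nv (colOf x) = nv (colOf y)) → κ k p (fun j => a (nv j)) = 0)
  (hfact : ∀ (k : ℕ) (p : PP k) (nv : Fin k → ℕ),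
    (∀ x y, p.r x y → nv (colOf x) = nv (colOf y)) →
    κ k p (fun j => a (nv j)) =
      ∏ v ∈ Finset.univ.image nv,
        κ (Finset.univ.filter fun j => nv j = v).card
          (extractP p (Finset.univ.filter fun j => nv j = v)) (fun _ => a v))
include hsame hvanish hfact

lemma cumulant_comp_eq {k : ℕ} (p : PP k) (r : Fin k → ℕ) :
    κ k p (fun j => a (r j)) =
      if colSetoid p ≤ Setoid.ker r then blockCumulantProd κ (a 0) p (Setoid.ker r) else 0 := by
  split_ifs with h
  · rw [hfact k p r ((forall_rel_colOf_iff p r).2 h), blockCumulantProd,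
      ← prod_fibers_eq_prod_classesOf]
    exact Finset.prod_congr rfl fun v _ => hsame _ _ v 0
  · exact hvanish k p r fun h' => h ((forall_rel_colOf_iff p r).1 h')

lemma cumulant_smul_sum_range [Ring A] [Algebra ℂ A] (T : PTracial A)
    (hκ : ∀ (k : ℕ) (p : PP k) (a : Fin k → A),
      T.m k p a = ∑ p' : PP k, if pLe p' p then κ k p' a else 0)
    {k : ℕ} (p : PP k) (c : ℂ) (n : ℕ) :
    κ k p (fun _ => c • ∑ i ∈ Finset.range n, a i) =
      ∑ q : Setoid (Fin k), c ^ k * n.descFactorial (nC q) *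
        if colSetoid p ≤ q then blockCumulantProd κ (a 0) p q else 0 := by
  obtain ⟨F, hF⟩ := T.exists_multilinearMap_eq_cumulant hκ k p
  rw [← hF, F.map_smul_sum_const, Fintype.card_fin, hF, smul_eq_mul]
  simp only [cumulant_comp_eq hsame hvanish hfact]
  rw [sum_piFinset_range_ker
    (fun q => if colSetoid p ≤ q then blockCumulantProd κ (a 0) p q else 0), Finset.mul_sum]
  simp only [nsmul_eq_mul, mul_assoc]

end CentralLimit

/-- **central limit theorem for `P`-tracial algebras.**
Let `(a_n)` be `P`-free elements with the same `P`-distribution and vanishing first-order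
cumulants.  Then the cumulants of `S_n = n^{−1/2}(a₀+⋯+a_{n−1})` converge, and the limit of
`κ_p(S_n,…,S_n)` is the sum, over the set partitions `π` of the set of cycles of `p` whose
blocks are either a single cycle with two columns or two one-column cycles, of
`∏_{b∈π} κ_{p_{|∪b}}(a₀,…,a₀)` (partitions of the set of cycles being encoded as the
setoids `q` on the columns which are coarser than the cycle partition of `p`). -/
theorem ptracial_central_limit {A : Type*} [Ring A] [Algebra ℂ A] (T : PTracial A)
    (κ : ∀ k : ℕ, PP k → (Fin k → A) → ℂ)
    (hκ : ∀ (k : ℕ) (p : PP k) (a : Fin k → A),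
      T.m k p a = ∑ p' : PP k, if pLe p' p then κ k p' a else 0)
    (a : ℕ → A)
    (hsame : ∀ (k : ℕ) (p : PP k) (n n' : ℕ), κ k p (fun _ => a n) = κ k p (fun _ => a n'))
    (hvanish : ∀ (k : ℕ) (p : PP k) (nv : Fin k → ℕ),
      (¬ ∀ x y, p.r x y → nv (colOf x) = nv (colOf y)) →
      κ k p (fun j => a (nv j)) = 0)
    (hfact : ∀ (k : ℕ) (p : PP k) (nv : Fin k → ℕ),
      (∀ x y, p.r x y → nv (colOf x) = nv (colOf y)) →
      κ k p (fun j => a (nv j)) =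
        ∏ v ∈ Finset.univ.image nv,
          κ (Finset.univ.filter fun j => nv j = v).card
            (extractP p (Finset.univ.filter fun j => nv j = v)) (fun _ => a v))
    (hcent : ∀ q : PP 1, κ 1 q (fun _ => a 0) = 0)
    (k : ℕ) (p : PP k) :
    Filter.Tendsto
      (fun n : ℕ => κ k p fun _ => (((Real.sqrt n)⁻¹ : ℝ) : ℂ) • ∑ i ∈ Finset.range n, a i)
      Filter.atTop
      (nhds (∑ q : Setoid (Fin k),
        if colSetoid p ≤ q ∧
            (∀ b ∈ classesOf q,
              (b ∈ classesOf (colSetoid p) ∧ b.card = 2) ∨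
              (b.card = 2 ∧ ∀ j ∈ b,
                (Finset.univ.filter fun j' => (colSetoid p).r j j') = {j}))
          then ∏ b ∈ classesOf q, κ b.card (extractP p b) (fun _ => a 0)
          else 0)) := by
  simp only [cumulant_smul_sum_range hsame hvanish hfact T hκ]
  refine tendsto_finsetSum _ fun q _ => ?_
  by_cases hq : colSetoid p ≤ q
  · simp only [hq, if_true, true_and, pairing_iff_forall_card_eq_two hq]
    have hcent' : ∀ (m : ℕ) (r : PP m), m = 1 → κ m r (fun _ => a 0) = 0 := by
      rintro m r rfl
      exact hcent r
    exact tendsto_inv_sqrt_pow_mul_descFactorial_mul q _ fun ⟨b, hb, hcard⟩ =>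
      Finset.prod_eq_zero hb (hcent' _ _ hcard)
  · simp [hq]
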